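/- arXiv:2407.14013 — 2 statements merged into one kernel-verified Lean document; each statement's English description precedes it below -/
import Mathlib

section
/- Tangent-space injectivity as a smallest singular value: given a nonzero U ∈ ℝ^{n×r} and 𝐀 ∈ ℝ^{m×n(n+1)/2}, let Q ∈ ℝ^{n×k} (k = rank(U)) be an orthonormal basis for the column span of U, let Q⊥ be an orthonormal basis for its orthogonal complement, and define 𝐐 = [Q⊗_S Q, √2·Ψ_nᵀ(Q⊗Q⊥)]. Then λ_min(𝐐ᵀ𝐀ᵀ𝐀𝐐)^{1/2} = η_𝐀(U), where η_𝐀(U) := min{‖𝐀·svec(UVᵀ + VUᵀ)‖ : V ∈ ℝ^{n×r}, ‖UVᵀ + VUᵀ‖_F = 1}. -/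
open Matrix
open scoped Kronecker

noncomputable section

/-- Euclidean norm of a vector. -/
def vnorm {I : Type*} [Fintype I] (v : I → ℝ) : ℝ := Real.sqrt (∑ i, v i ^ 2)

/-- Frobenius norm of a matrix. -/
def frobNorm {I J : Type*} [Fintype I] [Fintype J] (A : Matrix I J ℝ) : ℝ :=
  Real.sqrt (∑ i, ∑ j, A i j ^ 2)

/-- Spectral norm (ℓ₂ operator norm) of a matrix. -/
def specNorm {I J : Type*} [Fintype I] [Fintype J] (A : Matrix I J ℝ) : ℝ :=
  sSup {c | ∃ v : J → ℝ, vnorm v ≤ 1 ∧ c = vnorm (A *ᵥ v)}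

/-- Largest (real) eigenvalue of a square matrix. -/
def lmax {I : Type*} [Fintype I] (A : Matrix I I ℝ) : ℝ :=
  sSup {t | ∃ v : I → ℝ, v ≠ 0 ∧ A *ᵥ v = t • v}

/-- Smallest (real) eigenvalue of a square matrix. -/
def lmin {I : Type*} [Fintype I] (A : Matrix I I ℝ) : ℝ :=
  sInf {t | ∃ v : I → ℝ, v ≠ 0 ∧ A *ᵥ v = t • v}

/-- Column-stacking vectorization `vec`: `vecM X (j, i) = X i j`. -/
def vecM {J : Type*} (X : Matrix J J ℝ) : J × J → ℝ := fun p => X p.2 p.1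

/-- `Ψ` is an orthonormal basis matrix for the space of vectorized symmetric matrices:
`ΨᵀΨ = I` and `ΨΨᵀ` is the orthogonal projection onto vectorized symmetric matrices. -/
def IsSymBasis {J K : Type*} [Fintype J] [Fintype K] [DecidableEq K]
    (Ψ : Matrix (J × J) K ℝ) : Prop :=
  Ψᵀ * Ψ = 1 ∧ ∀ X : Matrix J J ℝ, Ψ *ᵥ (Ψᵀ *ᵥ vecM X) = vecM ((1/2 : ℝ) • (X + Xᵀ))

/-- Symmetric vectorization with respect to the basis matrix `Ψ`. -/
def svec {J K : Type*} [Fintype J] (Ψ : Matrix (J × J) K ℝ) (X : Matrix J J ℝ) : K → ℝ :=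
  Ψᵀ *ᵥ vecM X

/-- Symmetric Kronecker product with respect to the basis matrices `Ψ₁, Ψ₂`. -/
def skron {J J' K K' : Type*} [Fintype J] [Fintype J']
    (Ψ₁ : Matrix (J × J) K ℝ) (Ψ₂ : Matrix (J' × J') K' ℝ)
    (A B : Matrix J J' ℝ) : Matrix K K' ℝ :=
  (1/2 : ℝ) • (Ψ₁ᵀ * ((A ⊗ₖ B + B ⊗ₖ A) * Ψ₂))

/-- Positive semidefinite square root (junk value `0` off the PSD cone). -/
def psqrt {J : Type*} [Fintype J] [DecidableEq J] (A : Matrix J J ℝ) : Matrix J J ℝ :=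
  @dite _ A.PosSemidef (Classical.dec _) (fun h => (h.1.eigenvectorUnitary : Matrix J J ℝ) *
    diagonal (Real.sqrt ∘ h.1.eigenvalues) * (star h.1.eigenvectorUnitary : Matrix J J ℝ)) (fun _ => 0)

/-- Condition number in spectral norm. -/
def condNum {J : Type*} [Fintype J] [DecidableEq J] (M : Matrix J J ℝ) : ℝ :=
  specNorm M * specNorm M⁻¹

/-- Assumption A1: `W` is the Nesterov--Todd scaling point of a well-centered
primal-dual pair `(X, S)` that is `O(μ)`-close to a strictly complementary solution. -/
def A1 {n : ℕ} (μ L δ χ₁ : ℝ) (W X S Xs Ss : Matrix (Fin n) (Fin n) ℝ) : Prop :=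
  X.PosDef ∧ S.PosDef ∧ Xs.PosSemidef ∧ Ss.PosSemidef ∧ Xs * Ss = 0 ∧
    (Xs + Ss - χ₁⁻¹ • (1 : Matrix (Fin n) (Fin n) ℝ)).PosSemidef ∧
    ((1 : Matrix (Fin n) (Fin n) ℝ) - (Xs + Ss)).PosSemidef ∧
    W = psqrt X * (psqrt (psqrt X * S * psqrt X))⁻¹ * psqrt X ∧
    specNorm ((1/μ) • (psqrt X * S * psqrt X) - 1) ≤ δ ∧
    specNorm (X - Xs) ≤ L * μ ∧ specNorm (S - Ss) ≤ L

section Helpers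

variable {J J' K K' I ι : Type*}

/-- Generalized column-stacking vectorization for rectangular matrices. -/
def vecR (X : Matrix J' J ℝ) : J × J' → ℝ := fun p => X p.2 p.1

lemma vecM_eq_vecR (X : Matrix J J ℝ) : vecM X = vecR X := rfl

lemma vecR_inj {X Y : Matrix J' J ℝ} (h : vecR X = vecR Y) : X = Y := by
  ext i j; exact congrFun h (j, i)

lemma vecR_add (X Y : Matrix J' J ℝ) : vecR (X + Y) = vecR X + vecR Y := rfl

lemma vecR_smul (c : ℝ) (X : Matrix J' J ℝ) : vecR (c • X) = c • vecR X := rfl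

lemma eq_vecR (v : J × J' → ℝ) : v = vecR (Matrix.of fun i j => v (j, i)) := rfl

lemma kron_mulVec_vecR [Fintype K] [Fintype K'] (A : Matrix J K ℝ) (B : Matrix J' K' ℝ)
    (X : Matrix K' K ℝ) :
    (A ⊗ₖ B) *ᵥ vecR X = vecR (B * X * Aᵀ) := by
  ext ⟨i₁, i₂⟩
  simp only [Matrix.mulVec, dotProduct, vecR, Fintype.sum_prod_type,
    Matrix.kroneckerMap_apply, Matrix.mul_apply, Matrix.transpose_apply]
  simp only [Finset.sum_mul]
  refine Finset.sum_congr rfl fun j₁ _ => Finset.sum_congr rfl fun j₂ _ => by ring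

lemma symbasis_mulVec_cancel {Ψ : Matrix (J × J) K ℝ} [Fintype J] [Fintype K] [DecidableEq K]
    (hΨ : IsSymBasis Ψ) (w : K → ℝ) : Ψᵀ *ᵥ (Ψ *ᵥ w) = w := by
  rw [Matrix.mulVec_mulVec, hΨ.1, Matrix.one_mulVec]

lemma symbasis_range {Ψ : Matrix (J × J) K ℝ} [Fintype J] [Fintype K] [DecidableEq K]
    (hΨ : IsSymBasis Ψ) (w : K → ℝ) :
    ∃ S : Matrix J J ℝ, Ψ *ᵥ w = vecM S ∧ Sᵀ = S := by
  set S : Matrix J J ℝ := Matrix.of fun i j => (Ψ *ᵥ w) (j, i) with hSdef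
  have hv : Ψ *ᵥ w = vecM S := rfl
  have h2 := hΨ.2 S
  rw [← hv, symbasis_mulVec_cancel hΨ, hv] at h2
  have hS : S = (1/2 : ℝ) • (S + Sᵀ) := by
    ext i j; exact congrFun h2 (j, i)
  refine ⟨S, rfl, ?_⟩
  have := congrArg Matrix.transpose hS
  rw [Matrix.transpose_smul, Matrix.transpose_add, Matrix.transpose_transpose,
    add_comm] at this
  rw [this, ← hS]

lemma symbasis_svec_transpose {Ψ : Matrix (J × J) K ℝ} [Fintype J] [Fintype K] [DecidableEq K]
    (hΨ : IsSymBasis Ψ) (X : Matrix J J ℝ) :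
    Ψᵀ *ᵥ vecM Xᵀ = Ψᵀ *ᵥ vecM X := by
  have h1 := congrArg (fun v => Ψᵀ *ᵥ v) (hΨ.2 X)
  have h2 := congrArg (fun v => Ψᵀ *ᵥ v) (hΨ.2 Xᵀ)
  simp only [symbasis_mulVec_cancel hΨ] at h1 h2
  rw [Matrix.transpose_transpose, add_comm] at h2
  rw [h2, ← h1]

lemma symbasis_proj_sym {Ψ : Matrix (J × J) K ℝ} [Fintype J] [Fintype K] [DecidableEq K]
    (hΨ : IsSymBasis Ψ) {X : Matrix J J ℝ} (hX : Xᵀ = X) :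
    Ψ *ᵥ (Ψᵀ *ᵥ vecM X) = vecM X := by
  rw [hΨ.2 X, hX]
  rw [← two_smul ℝ X, smul_smul]
  norm_num

lemma vnorm_eq_sqrt_dot [Fintype I] (v : I → ℝ) : vnorm v = Real.sqrt (v ⬝ᵥ v) := by
  simp [vnorm, dotProduct, pow_two]

lemma dot_self_nonneg [Fintype I] (v : I → ℝ) : 0 ≤ v ⬝ᵥ v :=
  Finset.sum_nonneg fun i _ => mul_self_nonneg _

lemma vnorm_sq [Fintype I] (v : I → ℝ) : vnorm v ^ 2 = v ⬝ᵥ v := by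
  rw [vnorm_eq_sqrt_dot, Real.sq_sqrt (dot_self_nonneg v)]

lemma mulVec_dot_mulVec [Fintype I] [Fintype ι] (M : Matrix I ι ℝ) (v w : ι → ℝ) :
    (M *ᵥ v) ⬝ᵥ (M *ᵥ w) = v ⬝ᵥ ((Mᵀ * M) *ᵥ w) := by
  rw [← Matrix.mulVec_mulVec, Matrix.dotProduct_mulVec v, ← Matrix.mulVec_transpose,
    Matrix.transpose_transpose, Matrix.dotProduct_mulVec]

end Helpers
section Spectral

open scoped RealInnerProductSpace

variable {I ι : Type*} [Fintype I] [Fintype ι] [DecidableEq ι]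

lemma euc_inner_eq_dot (x y : EuclideanSpace ℝ ι) : ⟪x, y⟫ = (x : ι → ℝ) ⬝ᵥ (y : ι → ℝ) := by
  simp [PiLp.inner_apply, dotProduct, mul_comm]

lemma sqrt_lmin_eq [Nonempty ι] (M : Matrix I ι ℝ) :
    Real.sqrt (lmin (Mᵀ * M)) =
      sInf {c | ∃ w : ι → ℝ, vnorm w = 1 ∧ c = vnorm (M *ᵥ w)} := by
  set G := Mᵀ * M with hGdef
  have hG : G.IsHermitian := by simpa using Matrix.isHermitian_conjTranspose_mul_self M
  have hsym : Gᵀ = G := hG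
  set b := hG.eigenvectorBasis with hbdef
  set lam := hG.eigenvalues with hlamdef
  have hGb : ∀ j, G *ᵥ ⇑(b j) = lam j • ⇑(b j) := fun j => hG.mulVec_eigenvectorBasis j
  -- dot products with eigenvectors
  have hdot : ∀ (j : ι) (v : ι → ℝ), ⇑(b j) ⬝ᵥ (G *ᵥ v) = lam j * (⇑(b j) ⬝ᵥ v) := by
    intro j v
    rw [Matrix.dotProduct_mulVec, ← Matrix.mulVec_transpose, hsym, hGb j,
      smul_dotProduct, smul_eq_mul]
  have horth : ∀ i j : ι, ⇑(b i) ⬝ᵥ ⇑(b j) = if i = j then (1:ℝ) else 0 := by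
    intro i j
    rw [← euc_inner_eq_dot]
    exact orthonormal_iff_ite.mp b.orthonormal i j
  -- expansion of dot products in eigencoordinates
  have hexp : ∀ v w : ι → ℝ, v ⬝ᵥ w = ∑ j, (⇑(b j) ⬝ᵥ v) * (⇑(b j) ⬝ᵥ w) := by
    intro v w
    have hv : ∀ u : ι → ℝ, (((WithLp.equiv 2 (ι → ℝ)).symm u : EuclideanSpace ℝ ι) : ι → ℝ) = u :=
      fun _ => rfl
    have := b.sum_inner_mul_inner ((WithLp.equiv 2 (ι → ℝ)).symm v)
      ((WithLp.equiv 2 (ι → ℝ)).symm w)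
    simp only [euc_inner_eq_dot, hv] at this
    rw [← this]
    refine Finset.sum_congr rfl fun j _ => ?_
    rw [dotProduct_comm v]
  -- minimal eigenvalue
  obtain ⟨i0, -, hi0⟩ := Finset.exists_min_image Finset.univ lam ⟨Classical.arbitrary ι,
    Finset.mem_univ _⟩
  have hi0' : ∀ j, lam i0 ≤ lam j := fun j => hi0 j (Finset.mem_univ j)
  have hbne : ∀ j, ⇑(b j) ≠ 0 := by
    intro j h
    have h1 := horth j j
    rw [h, dotProduct_zero, if_pos rfl] at h1
    exact one_ne_zero h1.symm
  -- the eigenvalue set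
  have hset : {t | ∃ v : ι → ℝ, v ≠ 0 ∧ G *ᵥ v = t • v} = Set.range lam := by
    ext t
    constructor
    · rintro ⟨v, hv, hGv⟩
      by_contra hr
      apply hv
      have hall : ∀ j, ⇑(b j) ⬝ᵥ v = 0 := by
        intro j
        have h1 := hdot j v
        rw [hGv, dotProduct_smul, smul_eq_mul] at h1
        by_contra hne
        exact hr ⟨j, (mul_right_cancel₀ hne h1).symm⟩
      funext i
      have := hexp (Pi.single i 1) v
      simp only [hall, mul_zero, Finset.sum_const_zero, single_dotProduct,
        dotProduct_single] at this
      simpa using this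
    · rintro ⟨j, rfl⟩
      exact ⟨⇑(b j), hbne j, hGb j⟩
  have hlmin : lmin G = lam i0 := by
    rw [lmin, hset]
    exact IsLeast.csInf_eq ⟨⟨i0, rfl⟩, by rintro t ⟨j, rfl⟩; exact hi0' j⟩
  -- Rayleigh bounds
  have hray : ∀ v : ι → ℝ, lam i0 * (v ⬝ᵥ v) ≤ v ⬝ᵥ (G *ᵥ v) := by
    intro v
    rw [hexp v (G *ᵥ v), hexp v v, Finset.mul_sum]
    refine Finset.sum_le_sum fun j _ => ?_
    rw [hdot j v, dotProduct_comm (⇑(b j)) v]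
    have : (v ⬝ᵥ ⇑(b j)) * (lam j * (v ⬝ᵥ ⇑(b j))) = lam j * ((v ⬝ᵥ ⇑(b j)) * (v ⬝ᵥ ⇑(b j))) := by
      ring
    rw [this]
    exact mul_le_mul_of_nonneg_right (hi0' j) (mul_self_nonneg _)
  have hGdot : ∀ v : ι → ℝ, v ⬝ᵥ (G *ᵥ v) = (M *ᵥ v) ⬝ᵥ (M *ᵥ v) := fun v =>
    (mulVec_dot_mulVec M v v).symm
  have hbb : ∀ j, ⇑(b j) ⬝ᵥ ⇑(b j) = (1:ℝ) := by
    intro j; rw [horth j j, if_pos rfl]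
  have hGbb : ∀ j, ⇑(b j) ⬝ᵥ (G *ᵥ ⇑(b j)) = lam j := by
    intro j; rw [hdot j, hbb j, mul_one]
  have hlam0 : 0 ≤ lam i0 := by
    rw [← hGbb i0, hGdot]
    exact dot_self_nonneg _
  have hmem : Real.sqrt (lam i0) ∈ {c | ∃ w : ι → ℝ, vnorm w = 1 ∧ c = vnorm (M *ᵥ w)} := by
    refine ⟨⇑(b i0), ?_, ?_⟩
    · rw [vnorm_eq_sqrt_dot, hbb i0, Real.sqrt_one]
    · rw [vnorm_eq_sqrt_dot, ← hGdot, hGbb i0]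
  have hlb : ∀ c ∈ {c | ∃ w : ι → ℝ, vnorm w = 1 ∧ c = vnorm (M *ᵥ w)},
      Real.sqrt (lam i0) ≤ c := by
    rintro c ⟨w, hw1, rfl⟩
    rw [vnorm_eq_sqrt_dot] at hw1 ⊢
    have hww : w ⬝ᵥ w = 1 := by
      have := congrArg (fun x => x ^ 2) hw1
      simpa [Real.sq_sqrt (dot_self_nonneg w)] using this
    refine Real.sqrt_le_sqrt ?_
    rw [← hGdot]
    have := hray w
    rw [hww, mul_one] at this
    exact this
  rw [show lmin (Mᵀ * M) = lmin G from rfl, hlmin]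
  exact (IsLeast.csInf_eq ⟨hmem, hlb⟩).symm

end Spectral
section Ortho

variable {N K P Sn Sk : Type*} [Fintype N] [Fintype K] [Fintype P] [DecidableEq K] [DecidableEq P]
  [Fintype Sn] [Fintype Sk] [DecidableEq Sn] [DecidableEq Sk]
  {Ψn : Matrix (N × N) Sn ℝ} {Ψk : Matrix (K × K) Sk ℝ}
  {Q : Matrix N K ℝ} {Qp : Matrix N P ℝ}

lemma mulVec_ext {I J : Type*} [Fintype J] [DecidableEq J] {M N' : Matrix I J ℝ}
    (h : ∀ v, M *ᵥ v = N' *ᵥ v) : M = N' := by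
  ext i j
  simpa [Matrix.mulVec_single] using congrFun (h (Pi.single j 1)) i

lemma skron_eq : skron Ψn Ψk Q Q = Ψnᵀ * ((Q ⊗ₖ Q) * Ψk) := by
  unfold skron
  rw [show (Q ⊗ₖ Q + Q ⊗ₖ Q) = (2:ℝ) • (Q ⊗ₖ Q) from (two_smul ℝ _).symm]
  rw [Matrix.smul_mul, Matrix.mul_smul, smul_smul]
  norm_num

lemma LM1 (v₁ : Sk → ℝ) (S : Matrix K K ℝ) (hS : Ψk *ᵥ v₁ = vecM S) :
    skron Ψn Ψk Q Q *ᵥ v₁ = Ψnᵀ *ᵥ vecM (Q * S * Qᵀ) := by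
  rw [skron_eq, ← Matrix.mulVec_mulVec, ← Matrix.mulVec_mulVec, hS, vecM_eq_vecR,
    kron_mulVec_vecR, ← vecM_eq_vecR]

lemma LM2 (v₂ : K × P → ℝ) (Y : Matrix P K ℝ) (hY : v₂ = vecR Y) :
    (Real.sqrt 2 • (Ψnᵀ * (Q ⊗ₖ Qp))) *ᵥ v₂ =
      Real.sqrt 2 • (Ψnᵀ *ᵥ vecM (Qp * Y * Qᵀ)) := by
  rw [Matrix.smul_mulVec, ← Matrix.mulVec_mulVec, hY, kron_mulVec_vecR, ← vecM_eq_vecR]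

lemma LM1T (hΨn : IsSymBasis Ψn) (Z : Matrix N N ℝ) :
    (skron Ψn Ψk Q Q)ᵀ *ᵥ (Ψnᵀ *ᵥ vecM Z) =
      Ψkᵀ *ᵥ vecM ((1/2 : ℝ) • (Qᵀ * (Z + Zᵀ) * Q)) := by
  rw [skron_eq, Matrix.transpose_mul, Matrix.transpose_mul, Matrix.transpose_transpose,
    ← Matrix.kroneckerMap_transpose]
  rw [Matrix.mul_assoc, ← Matrix.mulVec_mulVec, ← Matrix.mulVec_mulVec, hΨn.2 Z]
  have h12 : vecM ((1/2 : ℝ) • (Z + Zᵀ)) = (1/2 : ℝ) • vecR (Z + Zᵀ) := rfl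
  rw [h12, Matrix.mulVec_smul, kron_mulVec_vecR, Matrix.transpose_transpose]
  have : vecM ((1/2 : ℝ) • (Qᵀ * (Z + Zᵀ) * Q)) = (1/2 : ℝ) • vecR (Qᵀ * (Z + Zᵀ) * Q) := rfl
  rw [this, Matrix.mulVec_smul]

lemma LM2T (hΨn : IsSymBasis Ψn) (Z : Matrix N N ℝ) :
    (Real.sqrt 2 • (Ψnᵀ * (Q ⊗ₖ Qp)))ᵀ *ᵥ (Ψnᵀ *ᵥ vecM Z) =
      Real.sqrt 2 • ((1/2 : ℝ) • vecR (Qpᵀ * (Z + Zᵀ) * Q)) := by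
  rw [Matrix.transpose_smul, Matrix.transpose_mul, Matrix.transpose_transpose,
    ← Matrix.kroneckerMap_transpose, Matrix.smul_mulVec,
    ← Matrix.mulVec_mulVec, hΨn.2 Z]
  have h12 : vecM ((1/2 : ℝ) • (Z + Zᵀ)) = (1/2 : ℝ) • vecR (Z + Zᵀ) := rfl
  rw [h12, Matrix.mulVec_smul, kron_mulVec_vecR, Matrix.transpose_transpose]

lemma bQ_orth (hΨn : IsSymBasis Ψn) (hΨk : IsSymBasis Ψk)
    (hQQ : Qᵀ * Q = 1) (hPP : Qpᵀ * Qp = 1) (hQP : Qᵀ * Qp = 0) :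
    (Matrix.fromCols (skron Ψn Ψk Q Q) (Real.sqrt 2 • (Ψnᵀ * (Q ⊗ₖ Qp))))ᵀ *
      Matrix.fromCols (skron Ψn Ψk Q Q) (Real.sqrt 2 • (Ψnᵀ * (Q ⊗ₖ Qp))) = 1 := by
  have hPQ : Qpᵀ * Q = 0 := by
    have := congrArg Matrix.transpose hQP
    simpa using this
  apply mulVec_ext
  intro v
  rw [← Sum.elim_comp_inl_inr v]
  set v₁ := v ∘ Sum.inl
  set v₂ := v ∘ Sum.inr
  obtain ⟨S, hS, hSs⟩ := symbasis_range hΨk v₁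
  set Y : Matrix P K ℝ := Matrix.of fun i j => v₂ (j, i) with hYdef
  have hY : v₂ = vecR Y := rfl
  rw [← Matrix.mulVec_mulVec, Matrix.transpose_fromCols, Matrix.fromCols_mulVec_sumElim,
    Matrix.one_mulVec]
  rw [LM1 v₁ S hS, LM2 v₂ Y hY, Matrix.fromRows_mulVec]
  have hZ1T : (Q * S * Qᵀ)ᵀ = Q * S * Qᵀ := by
    rw [Matrix.transpose_mul, Matrix.transpose_mul, Matrix.transpose_transpose, hSs,
      Matrix.mul_assoc]
  have hZ2T : (Qp * Y * Qᵀ)ᵀ = Q * Yᵀ * Qpᵀ := by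
    rw [Matrix.transpose_mul, Matrix.transpose_mul, Matrix.transpose_transpose,
      Matrix.mul_assoc]
  -- block (1,1) and (1,2)
  have e11 : (skron Ψn Ψk Q Q)ᵀ *ᵥ (Ψnᵀ *ᵥ vecM (Q * S * Qᵀ)) = v₁ := by
    rw [LM1T hΨn, hZ1T]
    have hM : (1/2 : ℝ) • (Qᵀ * (Q * S * Qᵀ + Q * S * Qᵀ) * Q) = S := by
      rw [← two_smul ℝ (Q * S * Qᵀ)]
      rw [Matrix.mul_smul, Matrix.smul_mul, smul_smul]
      norm_num
      calc Qᵀ * (Q * S * Qᵀ) * Q = (Qᵀ * Q) * S * (Qᵀ * Q) := by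
            simp only [Matrix.mul_assoc]
        _ = S := by rw [hQQ]; simp
    rw [hM, ← hS, symbasis_mulVec_cancel hΨk]
  have e12 : (skron Ψn Ψk Q Q)ᵀ *ᵥ (Real.sqrt 2 • (Ψnᵀ *ᵥ vecM (Qp * Y * Qᵀ))) = 0 := by
    rw [Matrix.mulVec_smul, LM1T hΨn, hZ2T]
    have hM : (1/2 : ℝ) • (Qᵀ * (Qp * Y * Qᵀ + Q * Yᵀ * Qpᵀ) * Q) = (0 : Matrix K K ℝ) := by
      rw [Matrix.mul_add, Matrix.add_mul]
      have h1 : Qᵀ * (Qp * Y * Qᵀ) * Q = 0 := by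
        rw [show Qᵀ * (Qp * Y * Qᵀ) = (Qᵀ * Qp) * Y * Qᵀ by simp only [Matrix.mul_assoc], hQP]
        simp
      have h2 : Qᵀ * (Q * Yᵀ * Qpᵀ) * Q = 0 := by
        rw [show Qᵀ * (Q * Yᵀ * Qpᵀ) * Q = (Qᵀ * Q) * (Yᵀ * (Qpᵀ * Q)) by
          simp only [Matrix.mul_assoc], hPQ]
        simp
      rw [h1, h2]
      simp
    rw [hM, show vecM (0 : Matrix K K ℝ) = 0 from funext fun _ => rfl, Matrix.mulVec_zero, smul_zero]
  have e21 : (Real.sqrt 2 • (Ψnᵀ * (Q ⊗ₖ Qp)))ᵀ *ᵥ (Ψnᵀ *ᵥ vecM (Q * S * Qᵀ)) = 0 := by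
    rw [LM2T hΨn, hZ1T]
    have hM : Qpᵀ * (Q * S * Qᵀ + Q * S * Qᵀ) * Q = 0 := by
      rw [show Qpᵀ * (Q * S * Qᵀ + Q * S * Qᵀ) * Q
          = (Qpᵀ * Q) * (S * (Qᵀ * Q)) + (Qpᵀ * Q) * (S * (Qᵀ * Q)) by
        rw [Matrix.mul_add, Matrix.add_mul]; simp only [Matrix.mul_assoc], hPQ]
      simp
    rw [hM, show vecR (0 : Matrix P K ℝ) = 0 from funext fun _ => rfl, smul_zero, smul_zero]
  have e22 : (Real.sqrt 2 • (Ψnᵀ * (Q ⊗ₖ Qp)))ᵀ *ᵥ (Real.sqrt 2 • (Ψnᵀ *ᵥ vecM (Qp * Y * Qᵀ)))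
      = v₂ := by
    rw [Matrix.mulVec_smul, LM2T hΨn, hZ2T]
    have hM : Qpᵀ * (Qp * Y * Qᵀ + Q * Yᵀ * Qpᵀ) * Q = Y := by
      rw [Matrix.mul_add, Matrix.add_mul]
      have h1 : Qpᵀ * (Qp * Y * Qᵀ) * Q = Y := by
        rw [show Qpᵀ * (Qp * Y * Qᵀ) * Q = (Qpᵀ * Qp) * (Y * (Qᵀ * Q)) by
          simp only [Matrix.mul_assoc], hQQ, hPP]
        simp
      have h2 : Qpᵀ * (Q * Yᵀ * Qpᵀ) * Q = 0 := by
        rw [show Qpᵀ * (Q * Yᵀ * Qpᵀ) * Q = (Qpᵀ * Q) * (Yᵀ * (Qpᵀ * Q)) by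
          simp only [Matrix.mul_assoc], hPQ]
        simp
      rw [h1, h2, add_zero]
    rw [hM, smul_smul, smul_smul]
    rw [← Real.sqrt_mul_self (by norm_num : (0:ℝ) ≤ 2)]
    rw [hY]
    norm_num
  rw [Matrix.mulVec_add, Matrix.mulVec_add, e11, e12, e21, e22]
  ext (i | i) <;> simp

end Ortho
section Range

variable {N K P Sn Sk : Type*} [Fintype N] [Fintype K] [Fintype P] [DecidableEq K] [DecidableEq P]
  [Fintype Sn] [Fintype Sk] [DecidableEq Sn] [DecidableEq Sk]
  {Ψn : Matrix (N × N) Sn ℝ} {Ψk : Matrix (K × K) Sk ℝ}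
  {Q : Matrix N K ℝ} {Qp : Matrix N P ℝ}

lemma svec_add (Ψ : Matrix (N × N) Sn ℝ) (X Y : Matrix N N ℝ) :
    svec Ψ (X + Y) = svec Ψ X + svec Ψ Y := by
  unfold svec
  rw [show vecM (X + Y) = vecM X + vecM Y from rfl, Matrix.mulVec_add]

lemma svec_smul (Ψ : Matrix (N × N) Sn ℝ) (c : ℝ) (X : Matrix N N ℝ) :
    svec Ψ (c • X) = c • svec Ψ X := by
  unfold svec
  rw [show vecM (c • X) = c • vecM X from rfl, Matrix.mulVec_smul]

lemma trans_QBQp (B : Matrix K P ℝ) : (Qp * Bᵀ * Qᵀ)ᵀ = Q * B * Qpᵀ := by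
  simp [Matrix.transpose_mul, Matrix.mul_assoc]

lemma bQ_fwd (hΨn : IsSymBasis Ψn) (hΨk : IsSymBasis Ψk)
    (S : Matrix K K ℝ) (hSs : Sᵀ = S) (B : Matrix K P ℝ) :
    ∃ w : Sk ⊕ K × P → ℝ,
      Matrix.fromCols (skron Ψn Ψk Q Q) (Real.sqrt 2 • (Ψnᵀ * (Q ⊗ₖ Qp))) *ᵥ w =
        svec Ψn (Q * S * Qᵀ + Q * B * Qpᵀ + Qp * Bᵀ * Qᵀ) := by
  refine ⟨Sum.elim (svec Ψk S) (Real.sqrt 2 • vecR Bᵀ), ?_⟩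
  rw [Matrix.fromCols_mulVec_sumElim]
  have hS : Ψk *ᵥ svec Ψk S = vecM S := symbasis_proj_sym hΨk hSs
  rw [LM1 _ S hS, Matrix.mulVec_smul, LM2 (vecR Bᵀ) Bᵀ rfl]
  rw [svec_add, svec_add]
  have hb : svec Ψn (Q * B * Qpᵀ) = svec Ψn (Qp * Bᵀ * Qᵀ) := by
    rw [← trans_QBQp B]
    exact symbasis_svec_transpose hΨn _
  rw [hb]
  show Ψnᵀ *ᵥ vecM (Q * S * Qᵀ) + Real.sqrt 2 • Real.sqrt 2 • (Ψnᵀ *ᵥ vecM (Qp * Bᵀ * Qᵀ)) = _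
  rw [smul_smul, Real.mul_self_sqrt (by norm_num : (0:ℝ) ≤ 2)]
  simp only [svec]
  module

lemma bQ_bwd (hΨn : IsSymBasis Ψn) (hΨk : IsSymBasis Ψk) (w : Sk ⊕ K × P → ℝ) :
    ∃ (S : Matrix K K ℝ) (B : Matrix K P ℝ), Sᵀ = S ∧
      Matrix.fromCols (skron Ψn Ψk Q Q) (Real.sqrt 2 • (Ψnᵀ * (Q ⊗ₖ Qp))) *ᵥ w =
        svec Ψn (Q * S * Qᵀ + Q * B * Qpᵀ + Qp * Bᵀ * Qᵀ) := by
  obtain ⟨S, hS, hSs⟩ := symbasis_range hΨk (w ∘ Sum.inl)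
  set Y : Matrix P K ℝ := Matrix.of fun i j => (w ∘ Sum.inr) (j, i) with hYdef
  refine ⟨S, ((2:ℝ)⁻¹ * Real.sqrt 2) • Yᵀ, hSs, ?_⟩
  rw [← Sum.elim_comp_inl_inr w, Matrix.fromCols_mulVec_sumElim]
  rw [LM1 _ S hS, LM2 (w ∘ Sum.inr) Y rfl]
  have hBt : (((2:ℝ)⁻¹ * Real.sqrt 2) • Yᵀ)ᵀ = ((2:ℝ)⁻¹ * Real.sqrt 2) • Y := by
    rw [Matrix.transpose_smul, Matrix.transpose_transpose]
  rw [hBt]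
  have h1 : Q * (((2:ℝ)⁻¹ * Real.sqrt 2) • Yᵀ) * Qpᵀ
      = ((2:ℝ)⁻¹ * Real.sqrt 2) • (Q * Yᵀ * Qpᵀ) := by
    rw [Matrix.mul_smul, Matrix.smul_mul]
  have h2 : Qp * (((2:ℝ)⁻¹ * Real.sqrt 2) • Y) * Qᵀ
      = ((2:ℝ)⁻¹ * Real.sqrt 2) • (Qp * Y * Qᵀ) := by
    rw [Matrix.mul_smul, Matrix.smul_mul]
  rw [h1, h2, svec_add, svec_add, svec_smul, svec_smul]
  have hb : svec Ψn (Q * Yᵀ * Qpᵀ) = svec Ψn (Qp * Y * Qᵀ) := by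
    have : (Qp * Y * Qᵀ)ᵀ = Q * Yᵀ * Qpᵀ := by
      simp [Matrix.transpose_mul, Matrix.mul_assoc]
    rw [← this]
    exact symbasis_svec_transpose hΨn _
  rw [hb]
  simp only [svec]
  module

end Range
section Main

lemma frob_eq_vnorm_svec {N Sn : Type*} [Fintype N] [Fintype Sn] [DecidableEq Sn]
    {Ψn : Matrix (N × N) Sn ℝ} (hΨ : IsSymBasis Ψn) {X : Matrix N N ℝ} (hX : Xᵀ = X) :
    frobNorm X = vnorm (svec Ψn X) := by
  rw [frobNorm, vnorm_eq_sqrt_dot]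
  congr 1
  have h1 : svec Ψn X ⬝ᵥ svec Ψn X = vecM X ⬝ᵥ vecM X := by
    unfold svec
    rw [mulVec_dot_mulVec, Matrix.transpose_transpose, ← Matrix.mulVec_mulVec,
      symbasis_proj_sym hΨ hX]
  rw [h1]
  simp only [dotProduct, vecM, Fintype.sum_prod_type, pow_two]
  exact Finset.sum_comm

lemma vnorm_mulVec_orth {I J : Type*} [Fintype I] [Fintype J] [DecidableEq J]
    {M : Matrix I J ℝ} (h : Mᵀ * M = 1) (w : J → ℝ) : vnorm (M *ᵥ w) = vnorm w := by
  rw [vnorm_eq_sqrt_dot, vnorm_eq_sqrt_dot, mulVec_dot_mulVec, h, Matrix.one_mulVec]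

theorem stmt6' {n m r : ℕ}
    (Ψn : Matrix (Fin n × Fin n) (Fin (n * (n + 1) / 2)) ℝ) (hΨn : IsSymBasis Ψn)
    (U : Matrix (Fin n) (Fin r) ℝ) (hU : U ≠ 0)
    (A : Matrix (Fin m) (Fin (n * (n + 1) / 2)) ℝ)
    (Q : Matrix (Fin n) (Fin U.rank) ℝ) (Qp : Matrix (Fin n) (Fin (n - U.rank)) ℝ)
    (hQQ : Qᵀ * Q = 1) (hPP : Qpᵀ * Qp = 1) (hQP : Qᵀ * Qp = 0)
    (hfull : Q * Qᵀ + Qp * Qpᵀ = 1)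
    (hspan : LinearMap.range Q.mulVecLin = LinearMap.range U.mulVecLin)
    (Ψk : Matrix ((Fin U.rank) × (Fin U.rank)) (Fin (U.rank * (U.rank + 1) / 2)) ℝ)
    (hΨk : IsSymBasis Ψk)
    (bQ : Matrix (Fin (n * (n + 1) / 2))
      (Fin (U.rank * (U.rank + 1) / 2) ⊕ Fin U.rank × Fin (n - U.rank)) ℝ)
    (hbQ : bQ = Matrix.fromCols (skron Ψn Ψk Q Q) (Real.sqrt 2 • (Ψnᵀ * (Q ⊗ₖ Qp)))) :
    Real.sqrt (lmin (bQᵀ * (Aᵀ * (A * bQ)))) =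
      sInf {c | ∃ V : Matrix (Fin n) (Fin r) ℝ,
        frobNorm (U * Vᵀ + V * Uᵀ) = 1 ∧
          c = vnorm (A *ᵥ svec Ψn (U * Vᵀ + V * Uᵀ))} := by
  classical
  subst hbQ
  set bQ := Matrix.fromCols (skron Ψn Ψk Q Q) (Real.sqrt 2 • (Ψnᵀ * (Q ⊗ₖ Qp))) with hbQdef
  have hPQ : Qpᵀ * Q = 0 := by
    have := congrArg Matrix.transpose hQP
    simpa using this
  -- positivity of the rank
  have hk : U.rank ≠ 0 := by
    intro h0
    apply hU
    have hbot : LinearMap.range U.mulVecLin = ⊥ := Submodule.finrank_eq_zero.mp h0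
    have hz : U.mulVecLin = 0 := LinearMap.range_eq_bot.mp hbot
    ext i j
    have h1 : U *ᵥ Pi.single j 1 = 0 := by
      rw [← Matrix.mulVecLin_apply, hz]; rfl
    simpa [Matrix.mulVec_single] using congrFun h1 i
  have hk1 : 1 ≤ U.rank := Nat.one_le_iff_ne_zero.mpr hk
  haveI hne : Nonempty (Fin (U.rank * (U.rank + 1) / 2) ⊕ Fin U.rank × Fin (n - U.rank)) := by
    refine ⟨Sum.inl ⟨0, ?_⟩⟩
    have h2 : 2 ≤ U.rank * (U.rank + 1) := by
      calc 2 = 1 * 2 := by norm_num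
      _ ≤ U.rank * (U.rank + 1) := Nat.mul_le_mul hk1 (Nat.succ_le_succ hk1)
    exact Nat.div_pos h2 (by norm_num)
  have horth : bQᵀ * bQ = 1 := bQ_orth hΨn hΨk hQQ hPP hQP
  -- auxiliary facts about U and Q
  have hQpU : Qpᵀ * U = 0 := by
    ext i j
    have hcol : U *ᵥ Pi.single j 1 ∈ LinearMap.range Q.mulVecLin := by
      rw [hspan]; exact ⟨Pi.single j 1, rfl⟩
    obtain ⟨x, hx⟩ := hcol
    have h1 : (Qpᵀ * U) *ᵥ Pi.single j 1 = 0 := by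
      rw [← Matrix.mulVec_mulVec, ← hx, Matrix.mulVecLin_apply, Matrix.mulVec_mulVec, hPQ,
        Matrix.zero_mulVec]
    simpa [Matrix.mulVec_single] using congrFun h1 i
  have hUQC : U = Q * (Qᵀ * U) := by
    have h1 : (Q * Qᵀ + Qp * Qpᵀ) * U = U := by rw [hfull, Matrix.one_mul]
    rw [Matrix.add_mul, Matrix.mul_assoc, Matrix.mul_assoc, hQpU, Matrix.mul_zero,
      add_zero] at h1
    exact h1.symm
  -- the matrix R with U * R = Q
  have hcolQ : ∀ j, ∃ y, U.mulVecLin y = Q *ᵥ Pi.single j 1 := by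
    intro j
    have : Q *ᵥ Pi.single j 1 ∈ LinearMap.range U.mulVecLin := by
      rw [← hspan]; exact ⟨Pi.single j 1, rfl⟩
    exact this
  choose R' hR' using hcolQ
  set R : Matrix (Fin r) (Fin U.rank) ℝ := Matrix.of fun i j => R' j i with hRdef
  have hUR : U * R = Q := by
    ext i j
    have h1 : (U * R) *ᵥ Pi.single j 1 = Q *ᵥ Pi.single j 1 := by
      rw [← Matrix.mulVec_mulVec, show R *ᵥ Pi.single j 1 = R' j by
        simp [Matrix.mulVec_single, hRdef]; ext; rfl, ← Matrix.mulVecLin_apply, hR' j]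
    simpa [Matrix.mulVec_single] using congrFun h1 i
  -- LHS
  have hGe : bQᵀ * (Aᵀ * (A * bQ)) = (A * bQ)ᵀ * (A * bQ) := by
    rw [Matrix.transpose_mul]
    simp only [Matrix.mul_assoc]
  rw [hGe, sqrt_lmin_eq (A * bQ)]
  congr 1
  ext c
  simp only [Set.mem_setOf_eq]
  constructor
  · -- from a unit vector w to a matrix V
    rintro ⟨w, hw1, rfl⟩
    obtain ⟨S, B, hSs, hw⟩ := bQ_bwd hΨn hΨk w
    set V : Matrix (Fin n) (Fin r) ℝ :=
      ((R * Qᵀ) * ((1/2 : ℝ) • (Q * S * Qᵀ) + Q * B * Qpᵀ))ᵀ with hVdef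
    have hUV : U * Vᵀ = (1/2 : ℝ) • (Q * S * Qᵀ) + Q * B * Qpᵀ := by
      rw [hVdef, Matrix.transpose_transpose, show U * ((R * Qᵀ) *
          ((1/2 : ℝ) • (Q * S * Qᵀ) + Q * B * Qpᵀ))
          = (U * R) * (Qᵀ * ((1/2 : ℝ) • (Q * S * Qᵀ) + Q * B * Qpᵀ)) by
        simp only [Matrix.mul_assoc], hUR]
      rw [Matrix.mul_add, Matrix.mul_add]
      have e1 : Q * (Qᵀ * ((1/2 : ℝ) • (Q * S * Qᵀ))) = (1/2 : ℝ) • (Q * S * Qᵀ) := by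
        rw [Matrix.mul_smul, Matrix.mul_smul]
        congr 1
        rw [show Qᵀ * (Q * S * Qᵀ) = (Qᵀ * Q) * (S * Qᵀ) by simp only [Matrix.mul_assoc], hQQ,
          Matrix.one_mul, Matrix.mul_assoc]
      have e2 : Q * (Qᵀ * (Q * B * Qpᵀ)) = Q * B * Qpᵀ := by
        rw [show Qᵀ * (Q * B * Qpᵀ) = (Qᵀ * Q) * (B * Qpᵀ) by simp only [Matrix.mul_assoc], hQQ,
          Matrix.one_mul, Matrix.mul_assoc]
      rw [e1, e2]
    have hX : U * Vᵀ + V * Uᵀ = Q * S * Qᵀ + Q * B * Qpᵀ + Qp * Bᵀ * Qᵀ := by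
      have hVU : V * Uᵀ = (U * Vᵀ)ᵀ := by
        rw [Matrix.transpose_mul, Matrix.transpose_transpose]
      rw [hVU, hUV]
      rw [Matrix.transpose_add, Matrix.transpose_smul]
      have t1 : (Q * S * Qᵀ)ᵀ = Q * S * Qᵀ := by
        rw [Matrix.transpose_mul, Matrix.transpose_mul, Matrix.transpose_transpose, hSs,
          Matrix.mul_assoc]
      have t2 : (Q * B * Qpᵀ)ᵀ = Qp * Bᵀ * Qᵀ := by
        rw [Matrix.transpose_mul, Matrix.transpose_mul, Matrix.transpose_transpose,
          Matrix.mul_assoc]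
      rw [t1, t2]
      module
    have hXt : (Q * S * Qᵀ + Q * B * Qpᵀ + Qp * Bᵀ * Qᵀ)ᵀ
        = Q * S * Qᵀ + Q * B * Qpᵀ + Qp * Bᵀ * Qᵀ := by
      have t1 : (Q * S * Qᵀ)ᵀ = Q * S * Qᵀ := by
        rw [Matrix.transpose_mul, Matrix.transpose_mul, Matrix.transpose_transpose, hSs,
          Matrix.mul_assoc]
      have t2 : (Q * B * Qpᵀ)ᵀ = Qp * Bᵀ * Qᵀ := by
        rw [Matrix.transpose_mul, Matrix.transpose_mul, Matrix.transpose_transpose,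
          Matrix.mul_assoc]
      have t3 : (Qp * Bᵀ * Qᵀ)ᵀ = Q * B * Qpᵀ := trans_QBQp B
      rw [Matrix.transpose_add, Matrix.transpose_add, t1, t2, t3]
      abel
    refine ⟨V, ?_, ?_⟩
    · rw [hX, frob_eq_vnorm_svec hΨn hXt, ← hw, vnorm_mulVec_orth horth, hw1]
    · rw [hX, ← hw, Matrix.mulVec_mulVec]
  · -- from a matrix V to a unit vector w
    rintro ⟨V, hV1, rfl⟩
    set T : Matrix (Fin U.rank) (Fin n) ℝ := (Qᵀ * U) * Vᵀ with hTdef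
    set S : Matrix (Fin U.rank) (Fin U.rank) ℝ := T * Q + (T * Q)ᵀ with hSdef
    set B : Matrix (Fin U.rank) (Fin (n - U.rank)) ℝ := T * Qp with hBdef
    have hSs : Sᵀ = S := by
      rw [hSdef, Matrix.transpose_add, Matrix.transpose_transpose, add_comm]
    have hQT : U * Vᵀ = Q * T := by
      rw [hTdef, ← Matrix.mul_assoc, ← hUQC]
    have hX : U * Vᵀ + V * Uᵀ = Q * S * Qᵀ + Q * B * Qpᵀ + Qp * Bᵀ * Qᵀ := by
      have hVU : V * Uᵀ = (U * Vᵀ)ᵀ := by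
        rw [Matrix.transpose_mul, Matrix.transpose_transpose]
      have hsplit : Q * T = Q * (T * Q) * Qᵀ + Q * (T * Qp) * Qpᵀ := by
        calc Q * T = Q * T * 1 := by rw [Matrix.mul_one]
        _ = Q * T * (Q * Qᵀ + Qp * Qpᵀ) := by rw [hfull]
        _ = Q * (T * Q) * Qᵀ + Q * (T * Qp) * Qpᵀ := by
            rw [Matrix.mul_add]
            simp only [Matrix.mul_assoc]
      rw [hVU, hQT, hsplit]
      rw [Matrix.transpose_add]
      have t1 : (Q * (T * Q) * Qᵀ)ᵀ = Q * (T * Q)ᵀ * Qᵀ := by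
        simp only [Matrix.transpose_mul, Matrix.transpose_transpose, Matrix.mul_assoc]
      have t2 : (Q * (T * Qp) * Qpᵀ)ᵀ = Qp * (T * Qp)ᵀ * Qᵀ := by
        simp only [Matrix.transpose_mul, Matrix.transpose_transpose, Matrix.mul_assoc]
      rw [t1, t2, hSdef, hBdef]
      rw [Matrix.mul_add, Matrix.add_mul]
      abel
    have hXt : (Q * S * Qᵀ + Q * B * Qpᵀ + Qp * Bᵀ * Qᵀ)ᵀ
        = Q * S * Qᵀ + Q * B * Qpᵀ + Qp * Bᵀ * Qᵀ := by
      have t1 : (Q * S * Qᵀ)ᵀ = Q * S * Qᵀ := by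
        rw [Matrix.transpose_mul, Matrix.transpose_mul, Matrix.transpose_transpose, hSs,
          Matrix.mul_assoc]
      have t2 : (Q * B * Qpᵀ)ᵀ = Qp * Bᵀ * Qᵀ := by
        rw [Matrix.transpose_mul, Matrix.transpose_mul, Matrix.transpose_transpose,
          Matrix.mul_assoc]
      have t3 : (Qp * Bᵀ * Qᵀ)ᵀ = Q * B * Qpᵀ := trans_QBQp B
      rw [Matrix.transpose_add, Matrix.transpose_add, t1, t2, t3]
      abel
    obtain ⟨w, hw⟩ := bQ_fwd hΨn hΨk S hSs B
    refine ⟨w, ?_, ?_⟩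
    · rw [← vnorm_mulVec_orth horth w, hw, ← frob_eq_vnorm_svec hΨn hXt, ← hX]
      exact hV1
    · rw [hX, ← hw, Matrix.mulVec_mulVec]

end Main
/-- Lemma 4.4, tangent space injectivity as a smallest singular value. -/
theorem stmt6 {n m r : ℕ}
    (Ψn : Matrix (Fin n × Fin n) (Fin (n * (n + 1) / 2)) ℝ) (hΨn : IsSymBasis Ψn)
    (U : Matrix (Fin n) (Fin r) ℝ) (hU : U ≠ 0)
    (A : Matrix (Fin m) (Fin (n * (n + 1) / 2)) ℝ)
    -- `Q` an orthonormal basis of the column span of `U` (`k = rank U` columns),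
    -- `Q⊥` an orthonormal basis of its orthogonal complement
    (Q : Matrix (Fin n) (Fin U.rank) ℝ) (Qp : Matrix (Fin n) (Fin (n - U.rank)) ℝ)
    (hQQ : Qᵀ * Q = 1) (hPP : Qpᵀ * Qp = 1) (hQP : Qᵀ * Qp = 0)
    (hfull : Q * Qᵀ + Qp * Qpᵀ = 1)
    (hspan : LinearMap.range Q.mulVecLin = LinearMap.range U.mulVecLin)
    (Ψk : Matrix ((Fin U.rank) × (Fin U.rank)) (Fin (U.rank * (U.rank + 1) / 2)) ℝ)
    (hΨk : IsSymBasis Ψk)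
    (bQ : Matrix (Fin (n * (n + 1) / 2))
      (Fin (U.rank * (U.rank + 1) / 2) ⊕ Fin U.rank × Fin (n - U.rank)) ℝ)
    (hbQ : bQ = Matrix.fromCols (skron Ψn Ψk Q Q) (Real.sqrt 2 • (Ψnᵀ * (Q ⊗ₖ Qp)))) :
    Real.sqrt (lmin (bQᵀ * (Aᵀ * (A * bQ)))) =
      sInf {c | ∃ V : Matrix (Fin n) (Fin r) ℝ,
        frobNorm (U * Vᵀ + V * Uᵀ) = 1 ∧
          c = vnorm (A *ᵥ svec Ψn (U * Vᵀ + V * Uᵀ))} := by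
  exact stmt6' Ψn hΨn U hU A Q Qp hQQ hPP hQP hfull hspan Ψk hΨk bQ hbQ
end
end

section
/- Let E ∈ S₊₊ⁿ satisfy λ_min(E) ≤ β ≤ λ_max(E), and let U ∈ ℝ^{n×k} be arbitrary. Then cond((βI + UUᵀ)^{−1/2}(E + UUᵀ)(βI + UUᵀ)^{−1/2}) ≤ cond(E) = λ_max(E)/λ_min(E). -/
open Matrix
open scoped Kronecker

noncomputable section

section Aux



variable {n : ℕ}

private lemma realCT {I J : Type*} (A : Matrix I J ℝ) : Aᴴ = Aᵀ := by
  ext i j; simp [conjTranspose_apply]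

private lemma psdQuad {A : Matrix (Fin n) (Fin n) ℝ} (hA : A.PosSemidef) (v : Fin n → ℝ) :
    0 ≤ v ⬝ᵥ (A *ᵥ v) := by
  simpa using hA.dotProduct_mulVec_nonneg v

private lemma dotSelfPos {v : Fin n → ℝ} (hv : v ≠ 0) : 0 < v ⬝ᵥ v := by
  simpa using dotProduct_star_self_pos_iff.mpr hv

private lemma hermSubPSD {A : Matrix (Fin n) (Fin n) ℝ} (hA : A.IsHermitian) {c : ℝ}
    (h : ∀ i, c ≤ hA.eigenvalues i) : (A - c • 1).PosSemidef := by
  set V : Matrix (Fin n) (Fin n) ℝ := (hA.eigenvectorUnitary : Matrix (Fin n) (Fin n) ℝ)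
  have hV : V * star V = 1 := Matrix.mem_unitaryGroup_iff.mp (hA.eigenvectorUnitary).2
  have key : A - c • 1 = V * (diagonal (fun i => hA.eigenvalues i - c)) * star V := by
    have h1 : (c • 1 : Matrix (Fin n) (Fin n) ℝ) = V * (c • 1) * star V := by
      rw [Matrix.mul_smul, Matrix.smul_mul, Matrix.mul_one, hV]
    have h2 : (diagonal (fun i => hA.eigenvalues i - c) : Matrix (Fin n) (Fin n) ℝ)
        = diagonal (RCLike.ofReal ∘ hA.eigenvalues) - c • 1 := by
      ext i j
      by_cases hij : i = j <;>
        simp [diagonal_apply, hij, Matrix.one_apply, Matrix.smul_apply]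
    conv_lhs => rw [hA.spectral_theorem, h1]
    rw [h2, Matrix.mul_sub, Matrix.sub_mul]
    rfl
  rw [key]
  exact (posSemidef_diagonal_iff.mpr (fun i => sub_nonneg.mpr (h i))).mul_mul_conjTranspose_same V

private lemma hermSubPSD' {A : Matrix (Fin n) (Fin n) ℝ} (hA : A.IsHermitian) {c : ℝ}
    (h : ∀ i, hA.eigenvalues i ≤ c) : (c • 1 - A).PosSemidef := by
  set V : Matrix (Fin n) (Fin n) ℝ := (hA.eigenvectorUnitary : Matrix (Fin n) (Fin n) ℝ)
  have hV : V * star V = 1 := Matrix.mem_unitaryGroup_iff.mp (hA.eigenvectorUnitary).2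
  have key : c • 1 - A = V * (diagonal (fun i => c - hA.eigenvalues i)) * star V := by
    have h1 : (c • 1 : Matrix (Fin n) (Fin n) ℝ) = V * (c • 1) * star V := by
      rw [Matrix.mul_smul, Matrix.smul_mul, Matrix.mul_one, hV]
    have h2 : (diagonal (fun i => c - hA.eigenvalues i) : Matrix (Fin n) (Fin n) ℝ)
        = c • 1 - diagonal (RCLike.ofReal ∘ hA.eigenvalues) := by
      ext i j
      by_cases hij : i = j <;>
        simp [diagonal_apply, hij, Matrix.one_apply, Matrix.smul_apply]
    conv_lhs => rw [hA.spectral_theorem, h1]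
    rw [h2, Matrix.mul_sub, Matrix.sub_mul]
    rfl
  rw [key]
  exact (posSemidef_diagonal_iff.mpr (fun i => sub_nonneg.mpr (h i))).mul_mul_conjTranspose_same V

private lemma quadLower {A : Matrix (Fin n) (Fin n) ℝ} {c : ℝ}
    (h : (A - c • 1).PosSemidef) (v : Fin n → ℝ) : c * (v ⬝ᵥ v) ≤ v ⬝ᵥ (A *ᵥ v) := by
  have h0 := psdQuad h v
  rw [Matrix.sub_mulVec, dotProduct_sub, Matrix.smul_mulVec, Matrix.one_mulVec,
    dotProduct_smul] at h0
  simpa using sub_nonneg.mp h0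

private lemma quadUpper {A : Matrix (Fin n) (Fin n) ℝ} {c : ℝ}
    (h : (c • 1 - A).PosSemidef) (v : Fin n → ℝ) : v ⬝ᵥ (A *ᵥ v) ≤ c * (v ⬝ᵥ v) := by
  have h0 := psdQuad h v
  rw [Matrix.sub_mulVec, dotProduct_sub, Matrix.smul_mulVec, Matrix.one_mulVec,
    dotProduct_smul] at h0
  simpa using sub_nonneg.mp h0

private lemma eigMem {A : Matrix (Fin n) (Fin n) ℝ} (hA : A.IsHermitian) (i : Fin n) :
    hA.eigenvalues i ∈ {t : ℝ | ∃ v : Fin n → ℝ, v ≠ 0 ∧ A *ᵥ v = t • v} :=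
  ⟨⇑(hA.eigenvectorBasis i), (WithLp.ofLp_eq_zero 2).ne.2 <| hA.eigenvectorBasis.orthonormal.ne_zero i,
    hA.mulVec_eigenvectorBasis i⟩

private lemma memLower {A : Matrix (Fin n) (Fin n) ℝ} {c t : ℝ}
    (hq : ∀ v : Fin n → ℝ, c * (v ⬝ᵥ v) ≤ v ⬝ᵥ (A *ᵥ v))
    (ht : t ∈ {t : ℝ | ∃ v : Fin n → ℝ, v ≠ 0 ∧ A *ᵥ v = t • v}) : c ≤ t := by
  obtain ⟨v, hv0, hv⟩ := ht
  have hd := dotSelfPos hv0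
  have := hq v
  rw [hv, dotProduct_smul, smul_eq_mul] at this
  exact le_of_mul_le_mul_right (by linarith [this]) hd

private lemma memUpper {A : Matrix (Fin n) (Fin n) ℝ} {c t : ℝ}
    (hq : ∀ v : Fin n → ℝ, v ⬝ᵥ (A *ᵥ v) ≤ c * (v ⬝ᵥ v))
    (ht : t ∈ {t : ℝ | ∃ v : Fin n → ℝ, v ≠ 0 ∧ A *ᵥ v = t • v}) : t ≤ c := by
  obtain ⟨v, hv0, hv⟩ := ht
  have hd := dotSelfPos hv0
  have := hq v
  rw [hv, dotProduct_smul, smul_eq_mul] at this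
  exact le_of_mul_le_mul_right (by linarith [this]) hd



end Aux

/-- Claim 6.1: preconditioning a rank-`k` update with
`βI + UUᵀ`, `λ_min(E) ≤ β ≤ λ_max(E)`, does not worsen the condition number. -/
theorem stmt12 {n k : ℕ}
    (E : Matrix (Fin n) (Fin n) ℝ) (hE : E.PosDef)
    (β : ℝ) (hβ1 : lmin E ≤ β) (hβ2 : β ≤ lmax E)
    (U : Matrix (Fin n) (Fin k) ℝ)
    (M : Matrix (Fin n) (Fin n) ℝ)
    (hM : M = (psqrt (β • (1 : Matrix (Fin n) (Fin n) ℝ) + U * Uᵀ))⁻¹ * (E + U * Uᵀ) *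
      (psqrt (β • (1 : Matrix (Fin n) (Fin n) ℝ) + U * Uᵀ))⁻¹) :
    lmax M / lmin M ≤ lmax E / lmin E := by
  rcases Nat.eq_zero_or_pos n with hn | hn
  · subst hn
    have hset : ∀ A : Matrix (Fin 0) (Fin 0) ℝ,
        {t : ℝ | ∃ v : Fin 0 → ℝ, v ≠ 0 ∧ A *ᵥ v = t • v} = ∅ := by
      intro A
      ext t
      simp only [Set.mem_setOf_eq, Set.mem_empty_iff_false, iff_false, not_exists]
      rintro v ⟨hv, -⟩
      exact hv (Subsingleton.elim v 0)
    simp [lmax, lmin, hset, Real.sSup_empty, Real.sInf_empty]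
  haveI : Nonempty (Fin n) := ⟨⟨0, hn⟩⟩
  have hEH : E.IsHermitian := hE.1
  set a0 : ℝ := Finset.univ.inf' Finset.univ_nonempty hEH.eigenvalues with ha0
  set b0 : ℝ := Finset.univ.sup' Finset.univ_nonempty hEH.eigenvalues with hb0
  have ha0le : ∀ i, a0 ≤ hEH.eigenvalues i := fun i =>
    Finset.inf'_le _ (Finset.mem_univ i)
  have hb0ge : ∀ i, hEH.eigenvalues i ≤ b0 := fun i =>
    Finset.le_sup' _ (Finset.mem_univ i)
  have ha0pos : 0 < a0 := by
    obtain ⟨i, -, hi⟩ := Finset.exists_mem_eq_inf' Finset.univ_nonempty hEH.eigenvalues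
    rw [ha0, hi]
    exact hE.eigenvalues_pos i
  -- PSD bounds on E
  have hElow := quadLower (hermSubPSD hEH ha0le)
  have hEupp := quadUpper (hermSubPSD' hEH hb0ge)
  -- the eigen sets
  set SE := {t : ℝ | ∃ v : Fin n → ℝ, v ≠ 0 ∧ E *ᵥ v = t • v} with hSE
  have hSEne : SE.Nonempty := ⟨_, eigMem hEH (Classical.arbitrary (Fin n))⟩
  have hSElb : ∀ t ∈ SE, a0 ≤ t := fun t ht => memLower hElow ht
  have hSEub : ∀ t ∈ SE, t ≤ b0 := fun t ht => memUpper hEupp ht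
  have hlminE_ge : a0 ≤ lmin E := le_csInf hSEne hSElb
  have hlminE_le : lmin E ≤ a0 := by
    obtain ⟨i, -, hi⟩ := Finset.exists_mem_eq_inf' Finset.univ_nonempty hEH.eigenvalues
    rw [ha0, hi]
    exact csInf_le ⟨a0, hSElb⟩ (eigMem hEH i)
  have hlmaxE_le : lmax E ≤ b0 := csSup_le hSEne hSEub
  have hlmaxE_ge : b0 ≤ lmax E := by
    obtain ⟨i, -, hi⟩ := Finset.exists_mem_eq_sup' Finset.univ_nonempty hEH.eigenvalues
    rw [hb0, hi]
    exact le_csSup ⟨b0, hSEub⟩ (eigMem hEH i)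
  have hβa0 : a0 ≤ β := hlminE_ge.trans hβ1
  have hβb0 : β ≤ b0 := hβ2.trans hlmaxE_le
  have hβpos : 0 < β := lt_of_lt_of_le ha0pos hβa0
  -- the preconditioner
  set P : Matrix (Fin n) (Fin n) ℝ := β • (1 : Matrix (Fin n) (Fin n) ℝ) + U * Uᵀ with hPdef
  have hUUT : (U * Uᵀ).PosSemidef := by
    rw [← realCT U]
    exact posSemidef_self_mul_conjTranspose U
  have hβonePD : (β • (1 : Matrix (Fin n) (Fin n) ℝ)).PosDef := by
    refine Matrix.PosDef.of_dotProduct_mulVec_pos ?_ ?_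
    · rw [Matrix.IsHermitian, conjTranspose_smul, conjTranspose_one]
      simp
    · intro x hx
      have hmv : (β • (1 : Matrix (Fin n) (Fin n) ℝ)) *ᵥ x = β • x := by
        rw [Matrix.smul_mulVec, Matrix.one_mulVec]
      rw [hmv]
      simp only [star_trivial, dotProduct_smul, smul_eq_mul]
      exact mul_pos hβpos (dotSelfPos hx)
  have hP : P.PosDef := hβonePD.add_posSemidef hUUT
  set Q : Matrix (Fin n) (Fin n) ℝ := psqrt P with hQdef
  have hQeq : Q = (hP.1.eigenvectorUnitary : Matrix (Fin n) (Fin n) ℝ) *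
      diagonal (Real.sqrt ∘ hP.1.eigenvalues) *
      (star hP.1.eigenvectorUnitary : Matrix (Fin n) (Fin n) ℝ) := by
    rw [hQdef, psqrt, dif_pos hP.posSemidef]
  have hQpsd : Q.PosSemidef := by
    rw [hQeq]
    exact (posSemidef_diagonal_iff.mpr (fun i => Real.sqrt_nonneg _)).mul_mul_conjTranspose_same _
  have hQQ : Q * Q = P := by
    rw [hQeq]
    conv_rhs => rw [hP.1.spectral_theorem]
    rw [Unitary.conjStarAlgAut_apply]
    have hu : (star hP.1.eigenvectorUnitary : Matrix (Fin n) (Fin n) ℝ) *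
        (hP.1.eigenvectorUnitary : Matrix (Fin n) (Fin n) ℝ) = 1 := Unitary.coe_star_mul_self _
    have hD : diagonal (Real.sqrt ∘ hP.1.eigenvalues) * diagonal (Real.sqrt ∘ hP.1.eigenvalues)
        = diagonal (RCLike.ofReal ∘ hP.1.eigenvalues) := by
      rw [diagonal_mul_diagonal]; congr 1; ext i
      simp [Real.mul_self_sqrt (hP.eigenvalues_pos i).le]
    rw [show ∀ A B C : Matrix (Fin n) (Fin n) ℝ, A * B * C * (A * B * C) = A * (B * (C * A) * B) * C
      from fun A B C => by simp only [Matrix.mul_assoc], hu, Matrix.mul_one, hD]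
  have hQT : Qᵀ = Q := by rw [← realCT]; exact hQpsd.1
  have hQdet : IsUnit Q.det := by
    rw [isUnit_iff_ne_zero]
    intro h0
    have : P.det = 0 := by rw [← hQQ, det_mul, h0, mul_zero]
    exact (ne_of_gt hP.det_pos) this
  have hQinvT : Q⁻¹ᵀ = Q⁻¹ := by
    rw [show Q⁻¹ᵀ = Qᵀ⁻¹ from (Matrix.transpose_nonsing_inv Q), hQT]
  -- quadratic form identities
  have key : ∀ v : Fin n → ℝ,
      (a0 / β) * (v ⬝ᵥ v) ≤ v ⬝ᵥ (M *ᵥ v) ∧ v ⬝ᵥ (M *ᵥ v) ≤ (b0 / β) * (v ⬝ᵥ v) := by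
    intro v
    set w : Fin n → ℝ := Q⁻¹ *ᵥ v with hw
    have hvw : v = Q *ᵥ w := by
      rw [hw, Matrix.mulVec_mulVec, Matrix.mul_nonsing_inv _ hQdet, Matrix.one_mulVec]
    have hid1 : v ⬝ᵥ (M *ᵥ v) = w ⬝ᵥ ((E + U * Uᵀ) *ᵥ w) := by
      rw [hM, ← Matrix.mulVec_mulVec, ← Matrix.mulVec_mulVec, dotProduct_mulVec,
        ← Matrix.mulVec_transpose, hQinvT]
    have hid2 : v ⬝ᵥ v = β * (w ⬝ᵥ w) + (Uᵀ *ᵥ w) ⬝ᵥ (Uᵀ *ᵥ w) := by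
      conv_lhs => rw [hvw]
      rw [dotProduct_mulVec, ← Matrix.mulVec_transpose, hQT, Matrix.mulVec_mulVec, hQQ]
      rw [hPdef, Matrix.add_mulVec, Matrix.smul_mulVec, Matrix.one_mulVec,
        dotProduct_comm, dotProduct_add, dotProduct_smul, smul_eq_mul]
      congr 1
      rw [← Matrix.mulVec_mulVec, dotProduct_mulVec, ← Matrix.mulVec_transpose]
    have hid3 : w ⬝ᵥ ((E + U * Uᵀ) *ᵥ w)
        = w ⬝ᵥ (E *ᵥ w) + (Uᵀ *ᵥ w) ⬝ᵥ (Uᵀ *ᵥ w) := by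
      rw [Matrix.add_mulVec, dotProduct_add]
      congr 1
      rw [← Matrix.mulVec_mulVec, dotProduct_mulVec, ← Matrix.mulVec_transpose]
    set s : ℝ := (Uᵀ *ᵥ w) ⬝ᵥ (Uᵀ *ᵥ w) with hs
    have hs0 : 0 ≤ s := by
      have := dotProduct_star_self_nonneg (Uᵀ *ᵥ w)
      simpa using this
    have hwd : 0 ≤ w ⬝ᵥ w := by
      have := dotProduct_star_self_nonneg w
      simpa using this
    have hlo := hElow w
    have hup := hEupp w
    constructor
    · rw [hid1, hid3, hid2]
      have h1 : a0 / β ≤ 1 := (div_le_one hβpos).mpr hβa0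
      have h2 : a0 / β * β = a0 := div_mul_cancel₀ a0 (ne_of_gt hβpos)
      nlinarith [mul_nonneg (le_of_lt ha0pos) hwd]
    · rw [hid1, hid3, hid2]
      have h1 : (1 : ℝ) ≤ b0 / β := (one_le_div hβpos).mpr hβb0
      have h2 : b0 / β * β = b0 := div_mul_cancel₀ b0 (ne_of_gt hβpos)
      nlinarith [mul_nonneg (le_of_lt hβpos) hwd]
  -- M is Hermitian
  have hET : Eᵀ = E := by rw [← realCT E]; exact hEH.eq
  have hMT : Mᵀ = M := by
    rw [hM, transpose_mul, transpose_mul, hQinvT, transpose_add, transpose_mul,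
      transpose_transpose, hET, ← Matrix.mul_assoc]
  have hMH : M.IsHermitian := by rw [Matrix.IsHermitian, realCT, hMT]
  set SM := {t : ℝ | ∃ v : Fin n → ℝ, v ≠ 0 ∧ M *ᵥ v = t • v} with hSM
  have hSMne : SM.Nonempty := ⟨_, eigMem hMH (Classical.arbitrary (Fin n))⟩
  have hSMlb : ∀ t ∈ SM, a0 / β ≤ t := fun t ht => memLower (fun v => (key v).1) ht
  have hSMub : ∀ t ∈ SM, t ≤ b0 / β := fun t ht => memUpper (fun v => (key v).2) ht
  have hlminM : a0 / β ≤ lmin M := le_csInf hSMne hSMlb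
  have hlmaxM : lmax M ≤ b0 / β := csSup_le hSMne hSMub
  have ha0β : 0 < a0 / β := div_pos ha0pos hβpos
  have hb0a0 : 0 < b0 := lt_of_lt_of_le ha0pos (hβa0.trans hβb0)
  have step1 : lmax M / lmin M ≤ (b0 / β) / (a0 / β) :=
    div_le_div₀ (le_of_lt (div_pos hb0a0 hβpos)) hlmaxM ha0β hlminM
  have step2 : (b0 / β) / (a0 / β) = b0 / a0 := by
    field_simp
  have step3 : b0 / a0 ≤ lmax E / lmin E :=
    div_le_div₀ (le_trans (le_of_lt hb0a0) hlmaxE_ge) hlmaxE_ge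
      (lt_of_lt_of_le ha0pos hlminE_ge) hlminE_le
  calc lmax M / lmin M ≤ (b0 / β) / (a0 / β) := step1
    _ = b0 / a0 := step2
    _ ≤ lmax E / lmin E := step3
end
end
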